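/- The 4×4 matrix A = [[1,2√3,0,0],[−2√3,5,4,0],[0,−4,9,2√3],[0,0,−2√3,13]] satisfies (A−7I)⁴ = 0 and (A−7I)³ ≠ 0, and the 3×3 matrix B = [[3,2√2,0],[−2√2,7,2√2],[0,−2√2,11]] satisfies (B−7I)³ = 0 and (B−7I)² ≠ 0. -/

import Mathlib

/-! In spin-`j` language, `A - 7` and `B - 7` are `4 J_z + 2 (J_- - J_+)` for `j = 3/2` and `j = 1`:
the image of the square-zero element `!![2, -2; 2, -2]` of `sl₂` in the irreducible representation
of dimension `2j + 1`, hence a single nilpotent Jordan block. Concretely it suffices to compute the squares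
keeping `s = √3` (resp. `√2`) symbolic, subject only to `s² = 3` (resp. `s² = 2`). -/

open Matrix Real

noncomputable def Aodd : Matrix (Fin 4) (Fin 4) ℝ :=
  !![1, 2 * Real.sqrt 3, 0, 0;
     -(2 * Real.sqrt 3), 5, 4, 0;
     0, -4, 9, 2 * Real.sqrt 3;
     0, 0, -(2 * Real.sqrt 3), 13]

noncomputable def Beven : Matrix (Fin 3) (Fin 3) ℝ :=
  !![3, 2 * Real.sqrt 2, 0;
     -(2 * Real.sqrt 2), 7, 2 * Real.sqrt 2;
     0, -(2 * Real.sqrt 2), 11]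

section Nilpotent

variable {R : Type*} [CommRing R] {s : R}

def nilOdd (s : R) : Matrix (Fin 4) (Fin 4) R :=
  !![-6, 2 * s, 0, 0;
     -(2 * s), -2, 4, 0;
     0, -4, 2, 2 * s;
     0, 0, -(2 * s), 6]

def nilEven (s : R) : Matrix (Fin 3) (Fin 3) R :=
  !![-4, 2 * s, 0;
     -(2 * s), 0, 2 * s;
     0, -(2 * s), 4]

theorem nilOdd_sq (hs : s ^ 2 = 3) :
    nilOdd s ^ 2 =
      !![24, -(16 * s), 8 * s, 0;
         16 * s, -24, 0, 8 * s;
         8 * s, 0, -24, 16 * s;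
         0, 8 * s, -(16 * s), 24] := by
  ext i j
  fin_cases i <;> fin_cases j <;> simp [nilOdd, sq, mul_apply, Fin.sum_univ_four] <;> grind

theorem nilOdd_pow_four (hs : s ^ 2 = 3) : nilOdd s ^ 4 = 0 := by
  rw [pow_mul (nilOdd s) 2 2, nilOdd_sq hs]
  ext i j
  fin_cases i <;> fin_cases j <;> simp [sq, mul_apply, Fin.sum_univ_four] <;> grind

theorem nilOdd_pow_three_ne_zero [CharZero R] (hs : s ^ 2 = 3) : nilOdd s ^ 3 ≠ 0 := by
  have corner : (nilOdd s ^ 3) 0 3 = 48 := by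
    rw [pow_succ, nilOdd_sq hs]
    simp [nilOdd, mul_apply, Fin.sum_univ_four]
    grind
  intro h
  simp [h] at corner

theorem nilEven_sq (hs : s ^ 2 = 2) :
    nilEven s ^ 2 =
      !![8, -(8 * s), 8;
         8 * s, -16, 8 * s;
         8, -(8 * s), 8] := by
  ext i j
  fin_cases i <;> fin_cases j <;> simp [nilEven, sq, mul_apply, Fin.sum_univ_three] <;> grind

theorem nilEven_pow_three (hs : s ^ 2 = 2) : nilEven s ^ 3 = 0 := by
  rw [pow_succ, nilEven_sq hs]
  ext i j
  fin_cases i <;> fin_cases j <;> simp [nilEven, mul_apply, Fin.sum_univ_three] <;> grind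

theorem nilEven_sq_ne_zero [CharZero R] (hs : s ^ 2 = 2) : nilEven s ^ 2 ≠ 0 := by
  intro h
  simpa [nilEven_sq hs] using congrFun (congrFun h 0) 0

end Nilpotent

theorem Aodd_sub_smul_one : Aodd - (7 : ℝ) • 1 = nilOdd (√3) := by
  ext i j
  fin_cases i <;> fin_cases j <;> norm_num [Aodd, nilOdd, one_apply]

theorem Beven_sub_smul_one : Beven - (7 : ℝ) • 1 = nilEven (√2) := by
  ext i j
  fin_cases i <;> fin_cases j <;> norm_num [Beven, nilEven, one_apply]

theorem stmt_7 :
    (Aodd - (7 : ℝ) • 1) ^ 4 = 0 ∧ (Aodd - (7 : ℝ) • 1) ^ 3 ≠ 0 ∧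
    (Beven - (7 : ℝ) • 1) ^ 3 = 0 ∧ (Beven - (7 : ℝ) • 1) ^ 2 ≠ 0 := by
  have h3 : √3 ^ 2 = 3 := sq_sqrt (by norm_num)
  have h2 : √2 ^ 2 = 2 := sq_sqrt (by norm_num)
  rw [Aodd_sub_smul_one, Beven_sub_smul_one]
  exact ⟨nilOdd_pow_four h3, nilOdd_pow_three_ne_zero h3, nilEven_pow_three h2,
    nilEven_sq_ne_zero h2⟩
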